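/- arXiv:1408.0847 — 2 statements merged into one kernel-verified Lean document; each statement's English description precedes it below -/
import Mathlib

section
/- For every a ∈ ℝ, Γ(a, b)/W(b − a) → Ψ(a) as b → ∞. Consequently Γ(a, b) → +∞ as b → ∞ whenever Ψ(a) > 0 (in particular for a > a̲), and Γ(a, b) → −∞ as b → ∞ whenever Ψ(a) < 0 (in particular for a < a̲). -/
open MeasureTheory Filter Set

/-! Since `e^{-Φx} W(x)` increases to a limit `L > 0`, the quotient `W(b - y) / W(b - a)` tends to
`e^{-Φ(y - a)}` and, once `b` is large, is at most `2 e^{Φ(a - y)}`. Dominated convergence gives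
`Γ(a, b) / W(b - a) → Ψ(a)`, and `W(b - a) → ∞` turns the sign of `Ψ(a)` into the divergence of
`Γ(a, b)`.

For the sign, `Ψ(a) = e^{Φa} ∫_a^∞ e^{-Φy} f̃'(y) dy`. Where `f̃` is strictly increasing on
`[u, v]`, `f̃' ≥ 0` off a countable set, so by the fundamental theorem of calculus
`∫_u^v e^{-Φy} f̃'(y) dy ≥ e^{-Φv} (f̃(v) - f̃(u)) > 0`. The tail integral vanishes at `a̲`, so the
tail integral at `a` is `∫_a^{a̲}`, whose sign comes from the monotonicity of `f̃` on `(-∞, ā)`;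
for `a ≥ ā` it is positive because `f̃` increases there. -/

/-- `Ψ(s) = ∫_s^∞ e^{-Φ(y-s)} f̃'(y) dy`, where `g` plays the role of `f̃'`. -/
noncomputable def Psi (Φ : ℝ) (g : ℝ → ℝ) (s : ℝ) : ℝ :=
  ∫ y in Set.Ioi s, Real.exp (-(Φ * (y - s))) * g y

/-- `Γ(a,b) = C_D + C_U + ∫_a^b W(b-y) f̃'(y) dy`, where `g` plays the role of `f̃'`. -/
noncomputable def Gam (W g : ℝ → ℝ) (CU CD a b : ℝ) : ℝ :=
  CD + CU + ∫ y in a..b, W (b - y) * g y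

section PolynomialGrowth

variable {g : ℝ → ℝ} {C : ℝ} {n : ℕ}

lemma isBigO_one_add_abs_pow_mul_exp_neg {Φ : ℝ} (hΦ : 0 < Φ) (n : ℕ) :
    (fun y : ℝ => (1 + |y|) ^ n * Real.exp (-(Φ * y))) =O[atTop]
      fun y => Real.exp (-(Φ / 2) * y) := by
  have hlin : (fun y : ℝ => 1 + |y|) =O[atTop] fun y => y := by
    refine Asymptotics.IsBigO.of_bound 2 ?_
    filter_upwards [eventually_ge_atTop 1] with y hy
    rw [Real.norm_eq_abs, Real.norm_eq_abs, abs_of_nonneg (by positivity),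
      abs_of_nonneg (by linarith)]
    linarith
  have hpow := (hlin.pow n).trans_isLittleO (isLittleO_pow_exp_pos_mul_atTop n (half_pos hΦ))
  refine (hpow.isBigO.mul (Asymptotics.isBigO_refl (fun y => Real.exp (-(Φ * y))) atTop))
    |>.congr_right fun y => ?_
  rw [← Real.exp_add]
  ring_nf

lemma integrableOn_Ioi_exp_neg_mul_of_abs_le {Φ : ℝ} (hΦ : 0 < Φ) (hg_meas : Measurable g)
    (hg : ∀ x, |g x| ≤ C * (1 + |x|) ^ n) (a : ℝ) :
    IntegrableOn (fun y => Real.exp (-(Φ * y)) * g y) (Ioi a) := by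
  have hbound : IntegrableOn (fun y => C * ((1 + |y|) ^ n * Real.exp (-(Φ * y)))) (Ioi a) :=
    (integrable_of_isBigO_exp_neg (half_pos hΦ) (by fun_prop)
      (isBigO_one_add_abs_pow_mul_exp_neg hΦ n)).const_mul C
  refine hbound.mono' (by fun_prop) (ae_of_all _ fun y => ?_)
  rw [norm_mul, Real.norm_eq_abs, Real.norm_eq_abs, abs_of_pos (Real.exp_pos _)]
  calc Real.exp (-(Φ * y)) * |g y| ≤ Real.exp (-(Φ * y)) * (C * (1 + |y|) ^ n) :=
        mul_le_mul_of_nonneg_left (hg y) (Real.exp_pos _).le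
    _ = C * ((1 + |y|) ^ n * Real.exp (-(Φ * y))) := by ring

lemma intervalIntegrable_of_abs_le (hg_meas : Measurable g) (hg : ∀ x, |g x| ≤ C * (1 + |x|) ^ n)
    (u v : ℝ) : IntervalIntegrable g volume u v :=
  (Continuous.intervalIntegrable (by fun_prop) u v).mono_fun' hg_meas.aestronglyMeasurable
    (ae_of_all _ fun x => hg x)

end PolynomialGrowth

section DerivativeSign

variable {f g : ℝ → ℝ} {s D : Set ℝ} {x d Φ u v : ℝ}

lemma HasDerivAt.nonneg_of_monotoneOn_of_mem_nhds (hd : HasDerivAt f d x) (hs : s ∈ nhds x)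
    (hf : MonotoneOn f s) : 0 ≤ d :=
  hd.hasDerivWithinAt.nonneg_of_monotoneOn
    (accPt_iff_frequently_nhdsNE.2 (eventually_nhdsWithin_of_eventually_nhds hs).frequently) hf

lemma HasDerivAt.nonpos_of_antitoneOn_of_mem_nhds (hd : HasDerivAt f d x) (hs : s ∈ nhds x)
    (hf : AntitoneOn f s) : d ≤ 0 :=
  hd.hasDerivWithinAt.nonpos_of_antitoneOn
    (accPt_iff_frequently_nhdsNE.2 (eventually_nhdsWithin_of_eventually_nhds hs).frequently) hf

lemma intervalIntegral_exp_neg_mul_pos_of_strictMonoOn (hΦ : 0 ≤ Φ) (huv : u < v)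
    (hD : D.Countable) (hf : ContinuousOn f (Icc u v)) (hf_mono : StrictMonoOn f (Icc u v))
    (hderiv : ∀ x ∈ Ioo u v \ D, HasDerivAt f (g x) x) (hg : IntervalIntegrable g volume u v) :
    0 < ∫ y in u..v, Real.exp (-(Φ * y)) * g y := by
  have hg_nonneg : ∀ x ∈ Ioo u v \ D, 0 ≤ g x := fun x hx =>
    (hderiv x hx).nonneg_of_monotoneOn_of_mem_nhds (Icc_mem_nhds hx.1.1 hx.1.2)
      hf_mono.monotoneOn
  have hweight : (fun y => Real.exp (-(Φ * v)) * g y)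
      ≤ᵐ[volume.restrict (Icc u v)] fun y => Real.exp (-(Φ * y)) * g y := by
    rw [EventuallyLE, ae_restrict_iff' measurableSet_Icc]
    filter_upwards [(hD.union (countable_singleton u)).union (countable_singleton v)
      |>.ae_notMem volume] with y hy hyI
    simp only [mem_union, mem_singleton_iff, not_or] at hy
    have hy' : y ∈ Ioo u v \ D :=
      ⟨⟨lt_of_le_of_ne hyI.1 (Ne.symm hy.1.2), lt_of_le_of_ne hyI.2 hy.2⟩, hy.1.1⟩
    exact mul_le_mul_of_nonneg_right (Real.exp_le_exp.2 (by nlinarith [hyI.2]))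
      (hg_nonneg y hy')
  calc 0 < Real.exp (-(Φ * v)) * (f v - f u) :=
        mul_pos (Real.exp_pos _) (sub_pos.2 (hf_mono ⟨le_rfl, huv.le⟩ ⟨huv.le, le_rfl⟩ huv))
    _ = ∫ y in u..v, Real.exp (-(Φ * v)) * g y := by
        rw [intervalIntegral.integral_const_mul,
          integral_eq_of_hasDerivAt_off_countable_of_le f g huv.le hD hf hderiv hg]
    _ ≤ ∫ y in u..v, Real.exp (-(Φ * y)) * g y :=
        intervalIntegral.integral_mono_ae_restrict huv.le (hg.const_mul _)
          (hg.continuousOn_mul (by fun_prop)) hweight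

lemma intervalIntegral_exp_neg_mul_neg_of_strictAntiOn (hΦ : 0 ≤ Φ) (huv : u < v)
    (hD : D.Countable) (hf : ContinuousOn f (Icc u v)) (hf_anti : StrictAntiOn f (Icc u v))
    (hderiv : ∀ x ∈ Ioo u v \ D, HasDerivAt f (g x) x) (hg : IntervalIntegrable g volume u v) :
    ∫ y in u..v, Real.exp (-(Φ * y)) * g y < 0 := by
  have := intervalIntegral_exp_neg_mul_pos_of_strictMonoOn hΦ huv hD hf.neg hf_anti.neg
    (fun x hx => (hderiv x hx).neg) hg.neg
  simpa only [mul_neg, intervalIntegral.integral_neg, Left.neg_pos_iff] using this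

end DerivativeSign

section SignOfPsi

variable {Φ : ℝ} {f g : ℝ → ℝ} {D : Set ℝ} {abar aund a : ℝ}

lemma Psi_eq_exp_mul (Φ : ℝ) (g : ℝ → ℝ) (s : ℝ) :
    Psi Φ g s = Real.exp (Φ * s) * ∫ y in Ioi s, Real.exp (-(Φ * y)) * g y := by
  rw [Psi, ← integral_const_mul]
  refine setIntegral_congr_fun measurableSet_Ioi fun y _ => ?_
  rw [← mul_assoc, ← Real.exp_add]
  ring_nf

lemma setIntegral_Ioi_exp_neg_mul_eq_of_Psi_eq_zero
    (hint : ∀ s, IntegrableOn (fun y => Real.exp (-(Φ * y)) * g y) (Ioi s))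
    (h_aund : Psi Φ g aund = 0) (a : ℝ) :
    ∫ y in Ioi a, Real.exp (-(Φ * y)) * g y = ∫ y in a..aund, Real.exp (-(Φ * y)) * g y := by
  rw [Psi_eq_exp_mul, mul_eq_zero, or_iff_right (Real.exp_ne_zero _)] at h_aund
  rw [← intervalIntegral.integral_Ioi_sub_Ioi' (hint a) (hint aund), h_aund, sub_zero]

variable (hΦ : 0 < Φ) (hD : D.Countable) (hf : Continuous f)
  (hderiv : ∀ x ∉ D, HasDerivAt f (g x) x)
  (hg : ∀ u v, IntervalIntegrable g volume u v)
  (hint : ∀ s, IntegrableOn (fun y => Real.exp (-(Φ * y)) * g y) (Ioi s))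
include hΦ hD hf hderiv hg hint

lemma setIntegral_Ioi_exp_neg_mul_pos_of_strictMonoOn (hf_inc : StrictMonoOn f (Ioi abar))
    (ha : abar ≤ a) : 0 < ∫ y in Ioi a, Real.exp (-(Φ * y)) * g y := by
  have hnonneg : 0 ≤ᵐ[volume.restrict (Ioi a)] fun y => Real.exp (-(Φ * y)) * g y := by
    rw [EventuallyLE, ae_restrict_iff' measurableSet_Ioi]
    filter_upwards [hD.ae_notMem volume] with y hyD hy
    exact mul_nonneg (Real.exp_pos _).le ((hderiv y hyD).nonneg_of_monotoneOn_of_mem_nhds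
      (Ioi_mem_nhds (ha.trans_lt hy)) hf_inc.monotoneOn)
  -- `[a + 1, a + 2]` lies inside `(ā, ∞)` even when `a = ā`.
  calc 0 < ∫ y in (a + 1)..(a + 2), Real.exp (-(Φ * y)) * g y :=
        intervalIntegral_exp_neg_mul_pos_of_strictMonoOn hΦ.le (by linarith) hD hf.continuousOn
          (hf_inc.mono fun y hy => by simp only [mem_Icc, mem_Ioi] at hy ⊢; linarith)
          (fun x hx => hderiv x hx.2) (hg _ _)
    _ = ∫ y in Ioc (a + 1) (a + 2), Real.exp (-(Φ * y)) * g y :=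
        intervalIntegral.integral_of_le (by linarith)
    _ ≤ ∫ y in Ioi a, Real.exp (-(Φ * y)) * g y :=
        setIntegral_mono_set (hint a) hnonneg
          (Ioc_subset_Ioi_self.trans (Ioi_subset_Ioi (by linarith))).eventuallyLE

lemma Psi_pos_of_lt (hf_inc : StrictMonoOn f (Ioi abar)) (hf_dec : StrictAntiOn f (Iio abar))
    (h_aund : Psi Φ g aund = 0) (ha : aund < a) : 0 < Psi Φ g a := by
  rw [Psi_eq_exp_mul]
  refine mul_pos (Real.exp_pos _) ?_
  rcases le_or_gt abar a with habar | habar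
  · exact setIntegral_Ioi_exp_neg_mul_pos_of_strictMonoOn hΦ hD hf hderiv hg hint hf_inc habar
  · rw [setIntegral_Ioi_exp_neg_mul_eq_of_Psi_eq_zero hint h_aund, intervalIntegral.integral_symm,
      Left.neg_pos_iff]
    exact intervalIntegral_exp_neg_mul_neg_of_strictAntiOn hΦ.le ha hD hf.continuousOn
      (hf_dec.mono fun y hy => lt_of_le_of_lt hy.2 habar) (fun x hx => hderiv x hx.2) (hg _ _)

lemma Psi_neg_of_lt (hf_dec : StrictAntiOn f (Iio abar)) (h_aund_lt : aund < abar)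
    (h_aund : Psi Φ g aund = 0) (ha : a < aund) : Psi Φ g a < 0 := by
  rw [Psi_eq_exp_mul, setIntegral_Ioi_exp_neg_mul_eq_of_Psi_eq_zero hint h_aund]
  exact mul_neg_of_pos_of_neg (Real.exp_pos _)
    (intervalIntegral_exp_neg_mul_neg_of_strictAntiOn hΦ.le ha hD hf.continuousOn
      (hf_dec.mono fun y hy => lt_of_le_of_lt hy.2 h_aund_lt) (fun x hx => hderiv x hx.2) (hg _ _))

end SignOfPsi

section ScaleFunction

variable {Φ L : ℝ} {W : ℝ → ℝ}

lemma tendsto_sub_const_atTop (c : ℝ) : Tendsto (fun b : ℝ => b - c) atTop atTop :=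
  (tendsto_atTop_add_const_right atTop (-c) tendsto_id).congr fun b => (sub_eq_add_neg b c).symm

lemma measurable_of_continuousOn_Ici_of_eq_zero (hW_neg : ∀ x, x < 0 → W x = 0)
    (hW_cont : ContinuousOn W (Ici 0)) : Measurable W := by
  have hW_eq : W = (Ici 0).indicator fun x => W (max x 0) := by
    funext x
    rcases le_or_gt 0 x with hx | hx
    · rw [indicator_of_mem (mem_Ici.2 hx), max_eq_left hx]
    · rw [indicator_of_notMem (notMem_Ici.2 hx), hW_neg x hx]
  rw [hW_eq]
  exact (hW_cont.comp_continuous (continuous_id.max continuous_const)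
    fun x => le_max_right x 0).measurable.indicator measurableSet_Ici

lemma nonneg_of_continuousOn_Ici_of_pos (hW_neg : ∀ x, x < 0 → W x = 0)
    (hW_cont : ContinuousOn W (Ici 0)) (hW_pos : ∀ x, 0 < x → 0 < W x) (x : ℝ) : 0 ≤ W x := by
  rcases lt_trichotomy x 0 with hx | rfl | hx
  · exact (hW_neg x hx).ge
  · exact ge_of_tendsto ((hW_cont 0 self_mem_Ici).mono_left (nhdsWithin_mono 0 Ioi_subset_Ici_self))
      (eventually_nhdsWithin_of_forall fun y hy => (hW_pos y hy).le)
  · exact (hW_pos x hx).le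

lemma exp_neg_mul_mul_le_of_monotoneOn (hW_neg : ∀ x, x < 0 → W x = 0)
    (hW_exp : MonotoneOn (fun x => Real.exp (-(Φ * x)) * W x) (Ici 0))
    (hlim : Tendsto (fun x => Real.exp (-(Φ * x)) * W x) atTop (nhds L)) (hL : 0 ≤ L) (x : ℝ) :
    Real.exp (-(Φ * x)) * W x ≤ L := by
  rcases le_or_gt 0 x with hx | hx
  · exact ge_of_tendsto hlim (eventually_ge_atTop x |>.mono fun z hz =>
      hW_exp (mem_Ici.2 hx) (mem_Ici.2 (hx.trans hz)) hz)
  · rw [hW_neg x hx, mul_zero]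
    exact hL

lemma tendsto_atTop_of_tendsto_exp_neg_mul_mul (hΦ : 0 < Φ) (hL : 0 < L)
    (hlim : Tendsto (fun x => Real.exp (-(Φ * x)) * W x) atTop (nhds L)) :
    Tendsto W atTop atTop := by
  refine ((Real.tendsto_exp_atTop.comp (tendsto_id.const_mul_atTop hΦ)).atTop_mul_pos hL
    hlim).congr fun x => ?_
  rw [Function.comp_apply, id, Real.exp_neg, mul_inv_cancel_left₀ (Real.exp_ne_zero _)]

lemma tendsto_div_sub_of_tendsto_exp_neg_mul_mul (hL : L ≠ 0)
    (hlim : Tendsto (fun x => Real.exp (-(Φ * x)) * W x) atTop (nhds L)) (a y : ℝ) :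
    Tendsto (fun b => W (b - y) / W (b - a)) atTop (nhds (Real.exp (-(Φ * (y - a))))) := by
  have hshift : ∀ c : ℝ, Tendsto (fun b => Real.exp (-(Φ * (b - c))) * W (b - c)) atTop (nhds L) :=
    fun c => hlim.comp (tendsto_sub_const_atTop c)
  have hquot := ((hshift y).div (hshift a) hL).mul_const (Real.exp (-(Φ * (y - a))))
  rw [div_self hL, one_mul] at hquot
  refine hquot.congr fun b => ?_
  have hexp :
      Real.exp (-(Φ * (b - y))) * Real.exp (-(Φ * (y - a))) = Real.exp (-(Φ * (b - a))) := by
    rw [← Real.exp_add]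
    ring_nf
  rw [Pi.div_apply, mul_div_mul_comm, mul_right_comm, div_mul_eq_mul_div, hexp,
    div_self (Real.exp_ne_zero _), one_mul]

lemma tendsto_setIntegral_mul_div_of_tendsto_exp_neg_mul_mul {h : ℝ → ℝ} {a : ℝ}
    (hW_meas : Measurable W) (hW_nonneg : ∀ x, 0 ≤ W x)
    (hW_le : ∀ x, Real.exp (-(Φ * x)) * W x ≤ L) (hL : 0 < L)
    (hlim : Tendsto (fun x => Real.exp (-(Φ * x)) * W x) atTop (nhds L)) (hh_meas : Measurable h)
    (hh : IntegrableOn (fun y => Real.exp (-(Φ * y)) * h y) (Ioi a)) :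
    Tendsto (fun b => ∫ y in Ioi a, W (b - y) * h y / W (b - a)) atTop
      (nhds (∫ y in Ioi a, Real.exp (-(Φ * (y - a))) * h y)) := by
  have hW_eq : ∀ x, W x = Real.exp (Φ * x) * (Real.exp (-(Φ * x)) * W x) := fun x => by
    rw [Real.exp_neg, mul_inv_cancel_left₀ (Real.exp_ne_zero _)]
  have hW_upper : ∀ x, W x ≤ L * Real.exp (Φ * x) := fun x => by
    rw [hW_eq x, mul_comm L]
    exact mul_le_mul_of_nonneg_left (hW_le x) (Real.exp_pos _).le
  have hW_lower : ∀ᶠ b in atTop, L / 2 * Real.exp (Φ * (b - a)) ≤ W (b - a) := by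
    filter_upwards [(tendsto_sub_const_atTop a).eventually
      (hlim.eventually (eventually_ge_nhds (half_lt_self hL)))] with b hb
    rw [hW_eq (b - a), mul_comm (L / 2)]
    exact mul_le_mul_of_nonneg_left hb (Real.exp_pos _).le
  refine tendsto_integral_filter_of_dominated_convergence
    (fun y => 2 * Real.exp (Φ * a) * ‖Real.exp (-(Φ * y)) * h y‖)
    (Eventually.of_forall fun b => by fun_prop) ?_ (hh.norm.const_mul _)
    (ae_of_all _ fun y => ?_)
  · filter_upwards [hW_lower] with b hb
    refine ae_of_all _ fun y => ?_
    have hexp : Real.exp (Φ * (b - y))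
        = Real.exp (Φ * (b - a)) * Real.exp (Φ * a) * Real.exp (-(Φ * y)) := by
      rw [← Real.exp_add, ← Real.exp_add]
      ring_nf
    rw [norm_div, norm_mul, norm_mul, Real.norm_eq_abs, Real.norm_eq_abs, Real.norm_eq_abs,
      Real.norm_eq_abs, abs_of_nonneg (hW_nonneg _), abs_of_nonneg (hW_nonneg _),
      abs_of_pos (Real.exp_pos _)]
    calc W (b - y) * |h y| / W (b - a)
        ≤ L * Real.exp (Φ * (b - y)) * |h y| / (L / 2 * Real.exp (Φ * (b - a))) :=
          div_le_div₀ (by positivity) (mul_le_mul_of_nonneg_right (hW_upper _) (abs_nonneg _))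
            (by positivity) hb
      _ = 2 * Real.exp (Φ * a) * (Real.exp (-(Φ * y)) * |h y|) := by
          rw [hexp]
          field_simp
  · simpa only [mul_div_right_comm] using
      (tendsto_div_sub_of_tendsto_exp_neg_mul_mul hL.ne' hlim a y).mul_const (h y)

end ScaleFunction

lemma tendsto_atTop_of_tendsto_div_of_pos {α : Type*} {l : Filter α} {F G : α → ℝ} {c : ℝ}
    (hc : 0 < c) (h : Tendsto (fun b => F b / G b) l (nhds c)) (hG : Tendsto G l atTop) :
    Tendsto F l atTop :=
  (Tendsto.pos_mul_atTop hc h hG).congr'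
    ((hG.eventually_gt_atTop 0).mono fun _ hb => div_mul_cancel₀ _ hb.ne')

lemma tendsto_atBot_of_tendsto_div_of_neg {α : Type*} {l : Filter α} {F G : α → ℝ} {c : ℝ}
    (hc : c < 0) (h : Tendsto (fun b => F b / G b) l (nhds c)) (hG : Tendsto G l atTop) :
    Tendsto F l atBot :=
  (Tendsto.neg_mul_atTop hc h hG).congr'
    ((hG.eventually_gt_atTop 0).mono fun _ hb => div_mul_cancel₀ _ hb.ne')

lemma Gam_eq_setIntegral_Ioi {W g : ℝ → ℝ} {CU CD a b : ℝ} (hW_neg : ∀ x, x < 0 → W x = 0)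
    (hab : a ≤ b) : Gam W g CU CD a b = CD + CU + ∫ y in Ioi a, W (b - y) * g y := by
  rw [Gam, intervalIntegral.integral_of_le hab,
    setIntegral_eq_of_subset_of_forall_sdiff_eq_zero measurableSet_Ioi Ioc_subset_Ioi_self]
  rintro y ⟨hya, hyb⟩
  rw [hW_neg _ (sub_neg.2 (not_le.1 fun h => hyb ⟨hya, h⟩)), zero_mul]

lemma tendsto_Gam_div_of_tendsto_exp_neg_mul_mul {Φ L CU CD a : ℝ} {W g : ℝ → ℝ}
    (hW_neg : ∀ x, x < 0 → W x = 0) (hW_meas : Measurable W) (hW_nonneg : ∀ x, 0 ≤ W x)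
    (hW_le : ∀ x, Real.exp (-(Φ * x)) * W x ≤ L) (hL : 0 < L)
    (hlim : Tendsto (fun x => Real.exp (-(Φ * x)) * W x) atTop (nhds L))
    (hW_top : Tendsto (fun b => W (b - a)) atTop atTop) (hg_meas : Measurable g)
    (hint : IntegrableOn (fun y => Real.exp (-(Φ * y)) * g y) (Ioi a)) :
    Tendsto (fun b => Gam W g CU CD a b / W (b - a)) atTop (nhds (Psi Φ g a)) := by
  have hsum := (tendsto_const_nhds (x := CD + CU)).div_atTop hW_top |>.add
    (tendsto_setIntegral_mul_div_of_tendsto_exp_neg_mul_mul hW_meas hW_nonneg hW_le hL hlim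
      hg_meas hint)
  rw [zero_add] at hsum
  refine hsum.congr' ((eventually_ge_atTop a).mono fun b hab => ?_)
  show _ = Gam W g CU CD a b / W (b - a)
  rw [Gam_eq_setIntegral_Ioi hW_neg hab, integral_div, ← add_div]

theorem stmt3_general
    (Φ : ℝ) (hΦ : 0 < Φ)
    (f g : ℝ → ℝ) (abar : ℝ)
    (hf_cont : Continuous f)
    (hf_pw : ∃ D : Set ℝ, D.Countable ∧ ∀ x ∉ D, HasDerivAt f (g x) x ∧ ContinuousAt g x)
    (hg_meas : Measurable g)
    (hg_poly : ∃ C : ℝ, ∃ n : ℕ, ∀ x : ℝ, |g x| ≤ C * (1 + |x|) ^ n)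
    (hf_inc : StrictMonoOn f (Set.Ioi abar))
    (hf_dec : StrictAntiOn f (Set.Iio abar))
    (W : ℝ → ℝ)
    (hW_neg : ∀ x, x < 0 → W x = 0)
    (hW_cont : ContinuousOn W (Set.Ici 0))
    (hW_pos : ∀ x, 0 < x → 0 < W x)
    (hW_exp : MonotoneOn (fun x => Real.exp (-(Φ * x)) * W x) (Set.Ici 0))
    (hW_lim : ∃ L : ℝ, 0 < L ∧
      Tendsto (fun x => Real.exp (-(Φ * x)) * W x) atTop (nhds L))
    (CU CD : ℝ)
    (aund : ℝ) (h_aund_lt : aund < abar) (h_aund : Psi Φ g aund = 0) :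
    ∀ a : ℝ,
      Tendsto (fun b => Gam W g CU CD a b / W (b - a)) atTop (nhds (Psi Φ g a)) ∧
      (0 < Psi Φ g a → Tendsto (fun b => Gam W g CU CD a b) atTop atTop) ∧
      (Psi Φ g a < 0 → Tendsto (fun b => Gam W g CU CD a b) atTop atBot) ∧
      (aund < a → Tendsto (fun b => Gam W g CU CD a b) atTop atTop) ∧
      (a < aund → Tendsto (fun b => Gam W g CU CD a b) atTop atBot) := by
  intro a
  obtain ⟨L, hL, hlim⟩ := hW_lim
  obtain ⟨D, hD, hderiv⟩ := hf_pw
  obtain ⟨C, n, hg_bound⟩ := hg_poly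
  have hf_deriv : ∀ x ∉ D, HasDerivAt f (g x) x := fun x hx => (hderiv x hx).1
  have hint := integrableOn_Ioi_exp_neg_mul_of_abs_le hΦ hg_meas hg_bound
  have hg_int := intervalIntegrable_of_abs_le hg_meas hg_bound
  have hW_top : Tendsto (fun b => W (b - a)) atTop atTop :=
    (tendsto_atTop_of_tendsto_exp_neg_mul_mul hΦ hL hlim).comp (tendsto_sub_const_atTop a)
  have hdiv : Tendsto (fun b => Gam W g CU CD a b / W (b - a)) atTop (nhds (Psi Φ g a)) :=
    tendsto_Gam_div_of_tendsto_exp_neg_mul_mul hW_neg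
      (measurable_of_continuousOn_Ici_of_eq_zero hW_neg hW_cont)
      (nonneg_of_continuousOn_Ici_of_pos hW_neg hW_cont hW_pos)
      (exp_neg_mul_mul_le_of_monotoneOn hW_neg hW_exp hlim hL.le) hL hlim hW_top hg_meas (hint a)
  have hup : 0 < Psi Φ g a → Tendsto (fun b => Gam W g CU CD a b) atTop atTop :=
    fun h => tendsto_atTop_of_tendsto_div_of_pos h hdiv hW_top
  have hdown : Psi Φ g a < 0 → Tendsto (fun b => Gam W g CU CD a b) atTop atBot :=
    fun h => tendsto_atBot_of_tendsto_div_of_neg h hdiv hW_top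
  exact ⟨hdiv, hup, hdown,
    fun ha => hup (Psi_pos_of_lt hΦ hD hf_cont hf_deriv hg_int hint hf_inc hf_dec h_aund ha),
    fun ha => hdown (Psi_neg_of_lt hΦ hD hf_cont hf_deriv hg_int hint hf_dec h_aund_lt h_aund ha)⟩

/-- `Γ(a,b)/W(b-a) → Ψ(a)` as `b → ∞`; consequently `Γ(a,b) → +∞` when `Ψ(a) > 0`
(in particular for `a > a̲`) and `Γ(a,b) → -∞` when `Ψ(a) < 0` (in particular for `a < a̲`). -/
theorem stmt3
    (Φ : ℝ) (hΦ : 0 < Φ)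
    (f g : ℝ → ℝ) (abar c₀ x₀ : ℝ)
    (hf_cont : Continuous f)
    (hf_pw : ∃ D : Set ℝ, D.Countable ∧ ∀ x ∉ D, HasDerivAt f (g x) x ∧ ContinuousAt g x)
    (hg_meas : Measurable g)
    (hf_poly : ∃ C : ℝ, ∃ n : ℕ, ∀ x : ℝ, |f x| ≤ C * (1 + |x|) ^ n)
    (hg_poly : ∃ C : ℝ, ∃ n : ℕ, ∀ x : ℝ, |g x| ≤ C * (1 + |x|) ^ n)
    (hf_inc : StrictMonoOn f (Set.Ioi abar))
    (hf_dec : StrictAntiOn f (Set.Iio abar))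
    (hf_conv : ConvexOn ℝ (Set.Iio abar) f)
    (hc₀ : 0 < c₀) (hx₀ : abar ≤ x₀)
    (hg_ge : ∀ x, x₀ ≤ x → c₀ ≤ g x)
    (W : ℝ → ℝ)
    (hW_neg : ∀ x, x < 0 → W x = 0)
    (hW_cont : ContinuousOn W (Set.Ici 0))
    (hW_mono : StrictMonoOn W (Set.Ici 0))
    (hW_pos : ∀ x, 0 < x → 0 < W x)
    (hW_exp : MonotoneOn (fun x => Real.exp (-(Φ * x)) * W x) (Set.Ici 0))
    (hW_lim : ∃ L : ℝ, 0 < L ∧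
      Tendsto (fun x => Real.exp (-(Φ * x)) * W x) atTop (nhds L))
    (CU CD : ℝ) (hC : 0 < CU + CD)
    (aund : ℝ) (h_aund_lt : aund < abar) (h_aund : Psi Φ g aund = 0) :
    ∀ a : ℝ,
      Tendsto (fun b => Gam W g CU CD a b / W (b - a)) atTop (nhds (Psi Φ g a)) ∧
      (0 < Psi Φ g a → Tendsto (fun b => Gam W g CU CD a b) atTop atTop) ∧
      (Psi Φ g a < 0 → Tendsto (fun b => Gam W g CU CD a b) atTop atBot) ∧
      (aund < a → Tendsto (fun b => Gam W g CU CD a b) atTop atTop) ∧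
      (a < aund → Tendsto (fun b => Gam W g CU CD a b) atTop atBot) :=
  stmt3_general Φ hΦ f g abar hf_cont hf_pw hg_meas hg_poly hf_inc hf_dec W hW_neg hW_cont hW_pos
    hW_exp hW_lim CU CD aund h_aund_lt h_aund
end

section
/- For every b > b*, Γ(a(b), y) ≤ 0 for all y ∈ [b*, b]. -/
open MeasureTheory Filter Set

open Topology Interval

/-!
Below `ā` the function `f̃` decreases, so `f̃′ ≤ 0` almost everywhere there and `Γ(·, b)` is
nondecreasing on `(-∞, ā)`. As `Γ(a*, ·) ≥ 0` strictly increases beyond `b̃(a*) = b*`, we get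
`Γ(a*, b) > 0 = Γ(a(b), b)`, hence `a(b) ≤ a*` and `Γ(a(b), b*) ≤ Γ(a*, b*) = 0`. The unimodal
function `Γ(a(b), ·)` is then at most `max (Γ(a(b), b*)) (Γ(a(b), b)) = 0` on `[b*, b]`. At its
turning point this needs continuity of `Γ(a(b), ·)`: although `W` may jump at `0`, the integrand
`W(b - y) f̃′(y)` is continuous in `b` for every `y ≠ b`, so dominated convergence applies.
-/

theorem monotone_of_monotoneOn_Ici_zero {W : ℝ → ℝ} (hW_neg : ∀ x, x < 0 → W x = 0)
    (hW_cont : ContinuousOn W (Ici 0)) (hW_mono : MonotoneOn W (Ici 0))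
    (hW_pos : ∀ x, 0 < x → 0 < W x) : Monotone W := by
  have hW₀ : 0 ≤ W 0 := by
    refine ge_of_tendsto ((hW_cont 0 self_mem_Ici).mono Ioi_subset_Ici_self) ?_
    filter_upwards [self_mem_nhdsWithin] with x hx using (hW_pos x hx).le
  intro x y hxy
  rcases lt_or_ge x 0 with hx | hx
  · rw [hW_neg x hx]
    rcases lt_or_ge y 0 with hy | hy
    · rw [hW_neg y hy]
    · exact hW₀.trans (hW_mono self_mem_Ici hy hy)
  · exact hW_mono hx (hx.trans hxy) hxy

theorem nonneg_of_monotone {W : ℝ → ℝ} (hW : Monotone W) (hW_neg : ∀ x, x < 0 → W x = 0)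
    (x : ℝ) : 0 ≤ W x := by
  rcases lt_or_ge x 0 with hx | hx
  · rw [hW_neg x hx]
  · exact (hW_neg (-1) (by norm_num)).symm.trans_le (hW (by linarith))

theorem locallyIntegrable_of_abs_le_poly {g : ℝ → ℝ} (hg : Measurable g) {C : ℝ} {n : ℕ}
    (hgC : ∀ x, |g x| ≤ C * (1 + |x|) ^ n) : LocallyIntegrable g := by
  have hpoly : Continuous fun x : ℝ => C * (1 + |x|) ^ n := by fun_prop
  refine hpoly.locallyIntegrable.mono hg.aestronglyMeasurable (Eventually.of_forall fun x => ?_)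
  simpa only [Real.norm_eq_abs] using (hgC x).trans (le_abs_self _)

theorem ae_nonpos_of_hasDerivAt_of_antitoneOn {f g : ℝ → ℝ} {D : Set ℝ} (hD : D.Countable)
    (hf' : ∀ x ∉ D, HasDerivAt f (g x) x) {s : Set ℝ} (hs : IsOpen s) (hf : AntitoneOn f s) :
    ∀ᵐ x, x ∈ s → g x ≤ 0 := by
  filter_upwards [hD.ae_notMem volume] with x hxD hxs
  refine (hf' x hxD).hasDerivWithinAt.nonpos_of_antitoneOn ?_ hf
  simpa using PerfectSpace.univ_preperfect.open_inter hs x ⟨hxs, mem_univ x⟩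

theorem nonpos_on_Icc_of_unimodal {φ : ℝ → ℝ} (hφ : Continuous φ) {a b₀ b : ℝ} {t : EReal}
    (hanti : ∀ b₁ b₂ : ℝ, a < b₁ → b₁ ≤ b₂ → (b₂ : EReal) < t → φ b₂ ≤ φ b₁)
    (hmono : ∀ b₁ b₂ : ℝ, t < b₁ → b₁ < b₂ → φ b₁ < φ b₂)
    (hab₀ : a < b₀) (h₀ : φ b₀ ≤ 0) (hb : φ b ≤ 0) : ∀ y ∈ Icc b₀ b, φ y ≤ 0 := by
  rintro y ⟨hy₀, hyb⟩
  rcases hyb.eq_or_lt with rfl | hyb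
  · exact hb
  rcases lt_trichotomy (y : EReal) t with hyt | rfl | hty
  · exact (hanti b₀ y hab₀ hy₀ hyt).trans h₀
  · have hright : ∀ᶠ s in 𝓝[>] y, φ s ≤ φ b := by
      filter_upwards [Ioo_mem_nhdsGT hyb] with s hs
      exact (hmono s b (by exact_mod_cast hs.1) hs.2).le
    exact (le_of_tendsto (hφ.continuousWithinAt (s := Ioi y)) hright).trans hb
  · exact ((hmono y b hty hyb).trans_le hb).le

section Kernel

variable {W g : ℝ → ℝ} {CU CD : ℝ}

theorem intervalIntegrable_kernel_mul (hW : Monotone W) (hg : LocallyIntegrable g)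
    (e c d : ℝ) : IntervalIntegrable (fun u => W (e - u) * g u) volume c d := by
  rw [intervalIntegrable_iff]
  refine ((hg.integrableOn_isCompact isCompact_uIcc).mono_set uIoc_subset_uIcc).bdd_mul
    (c := max |W (e - max c d)| |W (e - min c d)|)
    (hW.measurable.comp (measurable_const.sub measurable_id)).aestronglyMeasurable ?_
  filter_upwards [ae_restrict_mem measurableSet_uIoc] with u hu
  rw [Real.norm_eq_abs]
  exact abs_le_max_abs_abs (hW (by linarith [hu.2, le_max_right c d]))
    (hW (by linarith [hu.1, min_le_left c d]))

theorem Gam_eq_Gam_add_integral (hW : Monotone W) (hg : LocallyIntegrable g) (a₁ a₂ b : ℝ) :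
    Gam W g CU CD a₁ b = Gam W g CU CD a₂ b + ∫ u in a₁..a₂, W (b - u) * g u := by
  rw [Gam, Gam, ← intervalIntegral.integral_add_adjacent_intervals
    (intervalIntegrable_kernel_mul hW hg b a₁ a₂) (intervalIntegrable_kernel_mul hW hg b a₂ b)]
  ring

theorem Gam_le_Gam_of_ae_nonpos (hW : Monotone W) (hW_neg : ∀ x, x < 0 → W x = 0)
    (hg : LocallyIntegrable g) {a₁ a₂ : ℝ} (h : a₁ ≤ a₂) (hg_np : ∀ᵐ u, u ∈ Ioc a₁ a₂ → g u ≤ 0)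
    (b : ℝ) : Gam W g CU CD a₁ b ≤ Gam W g CU CD a₂ b := by
  rw [Gam_eq_Gam_add_integral hW hg a₁ a₂ b, add_le_iff_nonpos_right,
    intervalIntegral.integral_of_le h]
  refine integral_nonpos_of_ae ?_
  filter_upwards [ae_restrict_mem measurableSet_Ioc, ae_restrict_of_ae hg_np] with u hu hgu
  exact mul_nonpos_of_nonneg_of_nonpos (nonneg_of_monotone hW hW_neg _) (hgu hu)

theorem integral_kernel_mul_eq_zero (hW_neg : ∀ x, x < 0 → W x = 0) {s T : ℝ} (h : s ≤ T) :
    ∫ u in s..T, W (s - u) * g u = 0 := by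
  have hzero : ∀ᵐ u, u ∈ Ι s T → W (s - u) * g u = 0 := Eventually.of_forall fun u hu => by
    rw [uIoc_of_le h] at hu
    rw [hW_neg _ (by linarith [hu.1]), zero_mul]
  simpa using intervalIntegral.integral_congr_ae hzero

theorem continuousAt_integral_kernel_mul (hW : Monotone W) (hW_neg : ∀ x, x < 0 → W x = 0)
    (hW_cont : ContinuousOn W (Ici 0)) (hg : LocallyIntegrable g) (a T y : ℝ) :
    ContinuousAt (fun s => ∫ u in a..T, W (s - u) * g u) y := by
  refine intervalIntegral.continuousAt_of_dominated_interval
    (bound := fun u => W (y + 1 - min a T) * |g u|)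
    (Eventually.of_forall fun s =>
      (intervalIntegrable_kernel_mul hW hg s a T).def'.aestronglyMeasurable) ?_
    ((hg.integrableOn_isCompact isCompact_uIcc).intervalIntegrable.abs.const_mul _) ?_
  · filter_upwards [Iio_mem_nhds (lt_add_one y)] with s hs
    refine Eventually.of_forall fun u hu => ?_
    rw [norm_mul, Real.norm_eq_abs, Real.norm_eq_abs,
      abs_of_nonneg (nonneg_of_monotone hW hW_neg _)]
    exact mul_le_mul_of_nonneg_right (hW (by linarith [hu.1, min_le_left a T, mem_Iio.1 hs]))
      (abs_nonneg _)
  · filter_upwards [(countable_singleton y).ae_notMem volume] with u hu _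
    refine ContinuousAt.mul ?_ continuousAt_const
    rcases lt_or_gt_of_ne (mem_singleton_iff.not.1 hu) with huy | hyu
    · exact (hW_cont.continuousAt (Ici_mem_nhds (by linarith))).comp
        (continuousAt_id.sub continuousAt_const)
    · refine (continuousAt_const (y := (0 : ℝ))).congr ?_
      filter_upwards [Iio_mem_nhds hyu] with s hs
      exact (hW_neg _ (by linarith [mem_Iio.1 hs])).symm

theorem continuous_Gam (hW : Monotone W) (hW_neg : ∀ x, x < 0 → W x = 0)
    (hW_cont : ContinuousOn W (Ici 0)) (hg : LocallyIntegrable g) (a : ℝ) :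
    Continuous (Gam W g CU CD a) := by
  refine continuous_iff_continuousAt.2 fun y => ?_
  have hloc : (fun s => CD + CU + ∫ u in a..y + 1, W (s - u) * g u) =ᶠ[𝓝 y] Gam W g CU CD a := by
    filter_upwards [Iio_mem_nhds (lt_add_one y)] with s hs
    rw [Gam, ← intervalIntegral.integral_add_adjacent_intervals
      (intervalIntegrable_kernel_mul hW hg s a s) (intervalIntegrable_kernel_mul hW hg s s (y + 1)),
      integral_kernel_mul_eq_zero hW_neg (le_of_lt hs), add_zero]
  exact (continuousAt_const.add
    (continuousAt_integral_kernel_mul hW hW_neg hW_cont hg a (y + 1) y)).congr hloc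

end Kernel

theorem stmt10_general
    (f g : ℝ → ℝ) (abar : ℝ)
    (hf_pw : ∃ D : Set ℝ, D.Countable ∧ ∀ x ∉ D, HasDerivAt f (g x) x ∧ ContinuousAt g x)
    (hg_meas : Measurable g)
    (hg_poly : ∃ C : ℝ, ∃ n : ℕ, ∀ x : ℝ, |g x| ≤ C * (1 + |x|) ^ n)
    (hf_dec : StrictAntiOn f (Set.Iio abar))
    (W : ℝ → ℝ)
    (hW_neg : ∀ x, x < 0 → W x = 0)
    (hW_cont : ContinuousOn W (Set.Ici 0))
    (hW_mono : StrictMonoOn W (Set.Ici 0))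
    (hW_pos : ∀ x, 0 < x → 0 < W x)
    (CU CD : ℝ)
    -- the unimodality condition (Assumption 5.1 of the paper), with threshold `b̃(a) ∈ (a, ∞]`
    (btil : ℝ → EReal)
    (hbtil : ∀ a : ℝ, a < abar → (a : EReal) < btil a ∧
      (∀ b₁ b₂ : ℝ, a < b₁ → b₁ ≤ b₂ → (b₂ : EReal) < btil a →
        Gam W g CU CD a b₂ ≤ Gam W g CU CD a b₁) ∧
      (∀ b₁ b₂ : ℝ, btil a < (b₁ : EReal) → b₁ < b₂ →
        Gam W g CU CD a b₁ < Gam W g CU CD a b₂))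
    -- a Case-1 pair (a*, b*)
    (astar bstar : ℝ)
    (h₂ : astar < abar) (h₃ : abar < bstar)
    (h₄ : (bstar : EReal) = btil astar)
    (h₅ : Gam W g CU CD astar bstar = 0)
    (h₆ : ∀ x, astar ≤ x → 0 ≤ Gam W g CU CD astar x)
    -- the function b ↦ a(b): the unique root of Γ(·, b) below min(ā, b)
    (ab : ℝ → ℝ)
    (hab : ∀ b : ℝ, ab b < min abar b ∧ Gam W g CU CD (ab b) b = 0) :
    ∀ b : ℝ, bstar < b → ∀ y ∈ Set.Icc bstar b, Gam W g CU CD (ab b) y ≤ 0 := by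
  obtain ⟨D, hD, hf'⟩ := hf_pw
  obtain ⟨C, n, hgC⟩ := hg_poly
  have hW : Monotone W :=
    monotone_of_monotoneOn_Ici_zero hW_neg hW_cont hW_mono.monotoneOn hW_pos
  have hg : LocallyIntegrable g := locallyIntegrable_of_abs_le_poly hg_meas hgC
  have hg_nonpos : ∀ᵐ u, u ∈ Iio abar → g u ≤ 0 :=
    ae_nonpos_of_hasDerivAt_of_antitoneOn hD (fun x hx => (hf' x hx).1) isOpen_Iio hf_dec.antitoneOn
  have hGam_mono : ∀ {a₁ a₂ : ℝ} (e : ℝ), a₁ ≤ a₂ → a₂ < abar →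
      Gam W g CU CD a₁ e ≤ Gam W g CU CD a₂ e := fun e h₁₂ ha₂ =>
    Gam_le_Gam_of_ae_nonpos hW hW_neg hg h₁₂
      (hg_nonpos.mono fun u hu hu' => hu (hu'.2.trans_lt ha₂)) e
  intro b hb
  obtain ⟨hab_lt, hab_root⟩ := hab b
  have hab_abar : ab b < abar := hab_lt.trans_le (min_le_left _ _)
  have hpos : 0 < Gam W g CU CD astar b :=
    (h₆ _ (by linarith)).trans_lt ((hbtil astar h₂).2.2 ((bstar + b) / 2) b
      (by rw [← h₄]; exact_mod_cast (by linarith : bstar < (bstar + b) / 2)) (by linarith))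
  have hab_le : ab b ≤ astar := by
    by_contra! h
    exact (hpos.trans_le (hGam_mono b h.le hab_abar)).ne' hab_root
  obtain ⟨-, hanti, hmono⟩ := hbtil (ab b) hab_abar
  exact nonpos_on_Icc_of_unimodal (continuous_Gam hW hW_neg hW_cont hg (ab b)) hanti hmono
    (hab_abar.trans h₃) ((hGam_mono bstar hab_le h₂).trans h₅.le) hab_root.le

theorem stmt10
    (Φ : ℝ) (hΦ : 0 < Φ)
    (f g : ℝ → ℝ) (abar c₀ x₀ : ℝ)
    (hf_cont : Continuous f)
    (hf_pw : ∃ D : Set ℝ, D.Countable ∧ ∀ x ∉ D, HasDerivAt f (g x) x ∧ ContinuousAt g x)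
    (hg_meas : Measurable g)
    (hf_poly : ∃ C : ℝ, ∃ n : ℕ, ∀ x : ℝ, |f x| ≤ C * (1 + |x|) ^ n)
    (hg_poly : ∃ C : ℝ, ∃ n : ℕ, ∀ x : ℝ, |g x| ≤ C * (1 + |x|) ^ n)
    (hf_inc : StrictMonoOn f (Set.Ioi abar))
    (hf_dec : StrictAntiOn f (Set.Iio abar))
    (hf_conv : ConvexOn ℝ (Set.Iio abar) f)
    (hc₀ : 0 < c₀) (hx₀ : abar ≤ x₀)
    (hg_ge : ∀ x, x₀ ≤ x → c₀ ≤ g x)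
    (W : ℝ → ℝ)
    (hW_neg : ∀ x, x < 0 → W x = 0)
    (hW_cont : ContinuousOn W (Set.Ici 0))
    (hW_mono : StrictMonoOn W (Set.Ici 0))
    (hW_pos : ∀ x, 0 < x → 0 < W x)
    (CU CD : ℝ) (hC : 0 < CU + CD)
    (aund : ℝ) (h_aund_lt : aund < abar) (h_aund : Psi Φ g aund = 0)
    -- the unimodality condition (Assumption 5.1 of the paper), with threshold `b̃(a) ∈ (a, ∞]`
    (btil : ℝ → EReal)
    (hbtil : ∀ a : ℝ, a < abar → (a : EReal) < btil a ∧
      (∀ b₁ b₂ : ℝ, a < b₁ → b₁ ≤ b₂ → (b₂ : EReal) < btil a →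
        Gam W g CU CD a b₂ ≤ Gam W g CU CD a b₁) ∧
      (∀ b₁ b₂ : ℝ, btil a < (b₁ : EReal) → b₁ < b₂ →
        Gam W g CU CD a b₁ < Gam W g CU CD a b₂))
    -- a Case-1 pair (a*, b*)
    (astar bstar : ℝ)
    (h₁ : aund < astar) (h₂ : astar < abar) (h₃ : abar < bstar)
    (h₄ : (bstar : EReal) = btil astar)
    (h₅ : Gam W g CU CD astar bstar = 0)
    (h₆ : ∀ x, astar ≤ x → 0 ≤ Gam W g CU CD astar x)
    -- the function b ↦ a(b): the unique root of Γ(·, b) below min(ā, b)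
    (ab : ℝ → ℝ)
    (hab : ∀ b : ℝ, ab b < min abar b ∧ Gam W g CU CD (ab b) b = 0) :
    ∀ b : ℝ, bstar < b → ∀ y ∈ Set.Icc bstar b, Gam W g CU CD (ab b) y ≤ 0 :=
  stmt10_general f g abar hf_pw hg_meas hg_poly hf_dec W hW_neg hW_cont hW_mono hW_pos CU CD btil
    hbtil astar bstar h₂ h₃ h₄ h₅ h₆ ab hab
end
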